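/- For any undirected graph G, the minimum running buffer of its bidirected dependency graph satisfies MinVS(G) ≤ MRB(G^ℓ) ≤ MinVS(G) + 1, where both minima are taken over all linear orderings of the vertices. -/

import Mathlib

/-- The set of buffered vertices when the vertices in `S` have been processed:
vertices in `S` with an out-arc to an unprocessed vertex. -/
def bufferSet {V : Type*} [Fintype V] [DecidableEq V] (arc : V → V → Prop) [DecidableRel arc]
    (S : Finset V) : Finset V :=
  S.filter (fun u => ∃ v, v ∉ S ∧ arc u v)

/-- The running buffer size of the ordering `l` on the digraph with arc relation `arc`:
the peak buffer occupancy, accounting for the momentary extra buffer slot when the newly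
processed vertex itself enters the buffer before previously buffered vertices exit. -/
def RB {V : Type*} [Fintype V] [DecidableEq V] (arc : V → V → Prop) [DecidableRel arc]
    (l : List V) : ℕ :=
  (List.range l.length).foldl
    (fun m k =>
      let Sold := (l.take k).toFinset
      let Snew := (l.take (k + 1)).toFinset
      let tc : ℕ := if Snew \ Sold ⊆ bufferSet arc Snew then 1 else 0
      max m (max (bufferSet arc Snew).card ((bufferSet arc Sold).card + tc))) 0

/-- The minimum running buffer of a digraph: minimum of `RB` over all linear orderings. -/
noncomputable def MRB {V : Type*} [Fintype V] [DecidableEq V] (arc : V → V → Prop)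
    [DecidableRel arc] : ℕ :=
  sInf {k | ∃ l : List V, l.Nodup ∧ (∀ v, v ∈ l) ∧ RB arc l = k}
/-- The vertex separation value of a linear ordering `l` for the adjacency relation `adj`. -/
def VS {V : Type*} [Fintype V] [DecidableEq V] (adj : V → V → Prop) [DecidableRel adj]
    (l : List V) : ℕ :=
  (List.range l.length).foldl
    (fun m k => max m (bufferSet adj ((l.take (k + 1)).toFinset)).card) 0

/-- The vertex separation number: minimum of `VS` over all linear orderings. -/
noncomputable def MinVS {V : Type*} [Fintype V] [DecidableEq V] (adj : V → V → Prop)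
    [DecidableRel adj] : ℕ :=
  sInf {k | ∃ l : List V, l.Nodup ∧ (∀ v, v ∈ l) ∧ VS adj l = k}

/-!
Both bounds hold ordering by ordering. At each step the running buffer records the buffer after
the step, which is that step's vertex-separation term, and the buffer before it plus at most one
slot for the newly processed vertex; the buffer before a step is the previous step's term (empty
at the start). Hence `VS ≤ RB ≤ VS + 1` for every ordering, and the bounds pass to the minima.
-/

theorem foldl_max_le_iff {ι α : Type*} [LinearOrder α] (f : ι → α) (L : List ι) (a b : α) :
    L.foldl (fun m k => max m (f k)) a ≤ b ↔ a ≤ b ∧ ∀ k ∈ L, f k ≤ b := by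
  induction L generalizing a with
  | nil => simp
  | cons x xs ih => simp [ih, and_assoc]

theorem le_foldl_max {ι α : Type*} [LinearOrder α] (f : ι → α) {L : List ι} {k : ι} (hk : k ∈ L)
    (a : α) : f k ≤ L.foldl (fun m k => max m (f k)) a :=
  ((foldl_max_le_iff f L a _).1 le_rfl).2 k hk

theorem sInf_orderings_le {V : Type*} [Fintype V] {f g : List V → ℕ} {c : ℕ}
    (h : ∀ l, f l ≤ g l + c) :
    sInf {k | ∃ l : List V, l.Nodup ∧ (∀ v, v ∈ l) ∧ f l = k} ≤
      sInf {k | ∃ l : List V, l.Nodup ∧ (∀ v, v ∈ l) ∧ g l = k} + c := by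
  have hne : {k | ∃ l : List V, l.Nodup ∧ (∀ v, v ∈ l) ∧ g l = k}.Nonempty :=
    ⟨_, Finset.univ.toList, Finset.nodup_toList _, fun v => by simp, rfl⟩
  obtain ⟨l, hnd, hall, hl⟩ := Nat.sInf_mem hne
  calc sInf {k | ∃ l : List V, l.Nodup ∧ (∀ v, v ∈ l) ∧ f l = k} ≤ f l :=
        Nat.sInf_le ⟨l, hnd, hall, rfl⟩
    _ ≤ g l + c := h l
    _ = _ := by rw [hl]

section Orderings

variable {V : Type*} [Fintype V] [DecidableEq V] (arc : V → V → Prop) [DecidableRel arc]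

theorem card_bufferSet_take_le_vs (l : List V) {k : ℕ} (hk : k ≤ l.length) :
    (bufferSet arc (l.take k).toFinset).card ≤ VS arc l := by
  cases k with
  | zero => simp [bufferSet]
  | succ j =>
    exact le_foldl_max (fun k => (bufferSet arc (l.take (k + 1)).toFinset).card)
      (List.mem_range.2 hk) 0

theorem vs_le_rb (l : List V) : VS arc l ≤ RB arc l := by
  rw [VS, foldl_max_le_iff]
  refine ⟨Nat.zero_le _, fun k hk => ?_⟩
  refine le_trans ?_ (le_foldl_max _ hk 0)
  exact le_max_left _ _

theorem rb_le_vs_add_one (l : List V) : RB arc l ≤ VS arc l + 1 := by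
  rw [RB, foldl_max_le_iff]
  refine ⟨Nat.zero_le _, fun k hk => ?_⟩
  have hk := List.mem_range.1 hk
  have hnew := card_bufferSet_take_le_vs arc l (k := k + 1) hk
  have hold := card_bufferSet_take_le_vs arc l hk.le
  split <;> omega

theorem minVS_le_mrb : MinVS arc ≤ MRB arc :=
  sInf_orderings_le (c := 0) (vs_le_rb arc)

theorem mrb_le_minVS_add_one : MRB arc ≤ MinVS arc + 1 :=
  sInf_orderings_le (rb_le_vs_add_one arc)

end Orderings

/-- For any undirected graph `G`, the minimum running buffer of its
bidirected dependency graph satisfies `MinVS(G) ≤ MRB(G^ℓ) ≤ MinVS(G) + 1`. -/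
theorem minvs_le_mrb_le_minvs_add_one {V : Type*} [Fintype V] [DecidableEq V]
    (G : SimpleGraph V) [DecidableRel G.Adj] :
    MinVS G.Adj ≤ MRB G.Adj ∧ MRB G.Adj ≤ MinVS G.Adj + 1 :=
  ⟨minVS_le_mrb G.Adj, mrb_le_minVS_add_one G.Adj⟩
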